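/- arXiv:2004.04488 — 4 statements merged into one kernel-verified Lean document; each statement's English description precedes it below -/
import Mathlib

section
/- Let G be a bi-block graph on k ≥ 2 vertices with independence number α such that every cut-vertex of G has block index exactly 2. Then ρ(G) ≤ sqrt(α·(k−α)) (the spectral radius of K_{α,k−α}), with equality if and only if G is isomorphic to the complete bipartite graph K_{α,k−α}. -/
open scoped Classical

noncomputable section

namespace BiBlockPaper

variable {V : Type*}

/-- A set of vertices is independent: no two of its vertices are adjacent. -/
def IsIndep (G : SimpleGraph V) (s : Set V) : Prop :=
  s.Pairwise fun u w => ¬ G.Adj u w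

/-- The independence number of a finite simple graph: the maximum cardinality
of an independent set of vertices. -/
noncomputable def indepNum [Fintype V] (G : SimpleGraph V) : ℕ :=
  sSup {k : ℕ | ∃ s : Set V, IsIndep G s ∧ s.ncard = k}

/-- The (real) adjacency matrix of a finite simple graph. -/
noncomputable def adjMat [Fintype V] (G : SimpleGraph V) : Matrix V V ℝ :=
  fun i j => if G.Adj i j then 1 else 0

/-- The spectral radius of a finite simple graph: the largest (real) eigenvalue of
its adjacency matrix. -/
noncomputable def specRad [Fintype V] (G : SimpleGraph V) : ℝ :=
  sSup {t : ℝ | ∃ X : V → ℝ, X ≠ 0 ∧ (adjMat G).mulVec X = t • X}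

/-- `v` is a cut-vertex of the subgraph `H`: it belongs to `H` and deleting it
disconnects `H`. -/
def IsCutVtxOfSub {G : SimpleGraph V} (H : G.Subgraph) (v : V) : Prop :=
  v ∈ H.verts ∧ ¬ (H.deleteVerts {v}).coe.Preconnected

/-- `H` is a block of `G`: a maximal connected subgraph of `G` having no cut-vertex. -/
def IsBlock (G : SimpleGraph V) (H : G.Subgraph) : Prop :=
  H.Connected ∧ (∀ v, ¬ IsCutVtxOfSub H v) ∧
    ∀ H' : G.Subgraph, H ≤ H' → H'.Connected → (∀ v, ¬ IsCutVtxOfSub H' v) → H' = H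

/-- A subgraph is a complete bipartite graph (on its own vertex set). -/
def SubIsCompleteBipartite {G : SimpleGraph V} (H : G.Subgraph) : Prop :=
  ∃ M N : Set V, M.Nonempty ∧ N.Nonempty ∧ Disjoint M N ∧ M ∪ N = H.verts ∧
    ∀ u w, H.Adj u w ↔ (u ∈ M ∧ w ∈ N) ∨ (u ∈ N ∧ w ∈ M)

/-- A bi-block graph: a connected graph each of whose blocks is a complete
bipartite graph. -/
def IsBiBlockGraph (G : SimpleGraph V) : Prop :=
  G.Connected ∧ ∀ H : G.Subgraph, IsBlock G H → SubIsCompleteBipartite H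

/-- `v` is a cut-vertex of `G`: deleting `v` disconnects `G`. -/
def IsCutVertex (G : SimpleGraph V) (v : V) : Prop :=
  ¬ (G.induce ({v}ᶜ : Set V)).Preconnected

/-- The block index of `v`: the number of blocks of `G` containing `v`. -/
noncomputable def blockIndex (G : SimpleGraph V) (v : V) : ℕ :=
  {H : G.Subgraph | IsBlock G H ∧ v ∈ H.verts}.ncard

/-- `G` is a complete bipartite graph. -/
def IsCompleteBipartite (G : SimpleGraph V) : Prop :=
  ∃ M N : Set V, M.Nonempty ∧ N.Nonempty ∧ Disjoint M N ∧ M ∪ N = Set.univ ∧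
    ∀ u w, G.Adj u w ↔ (u ∈ M ∧ w ∈ N) ∨ (u ∈ N ∧ w ∈ M)

/-- Vertex type of the two-block graph `G(p,q,m,n)`: the parts are
`P` (size `p`), `Q \ {v}` (size `q-1`), the glue vertex `v`,
`M \ {v}` (size `m-1`) and `N` (size `n`). -/
abbrev TBV (p q m n : ℕ) : Type :=
  Fin p ⊕ (Fin (q - 1) ⊕ (Unit ⊕ (Fin (m - 1) ⊕ Fin n)))

/-- Which of the five pieces of `TBV p q m n` a vertex lies in:
`0 ↦ P`, `1 ↦ Q \ {v}`, `2 ↦ v`, `3 ↦ M \ {v}`, `4 ↦ N`.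
So `Q` consists of the vertices with tag `1` or `2`, and `M` of those with tag `2` or `3`. -/
def part {p q m n : ℕ} : TBV p q m n → ℕ
  | Sum.inl _ => 0
  | Sum.inr (Sum.inl _) => 1
  | Sum.inr (Sum.inr (Sum.inl _)) => 2
  | Sum.inr (Sum.inr (Sum.inr (Sum.inl _))) => 3
  | Sum.inr (Sum.inr (Sum.inr (Sum.inr _))) => 4

/-- The two-block graph `G(p,q,m,n)`: two complete bipartite blocks
`K(P,Q)` and `K(M,N)` glued at the cut-vertex `v`, where `Q ∩ M = {v}`. -/
def twoBlock (p q m n : ℕ) : SimpleGraph (TBV p q m n) where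
  Adj x y :=
    (part x = 0 ∧ (part y = 1 ∨ part y = 2)) ∨
    ((part x = 1 ∨ part x = 2) ∧ part y = 0) ∨
    ((part x = 2 ∨ part x = 3) ∧ part y = 4) ∨
    (part x = 4 ∧ (part y = 2 ∨ part y = 3))
  symm := ⟨fun x y h => by tauto⟩
  loopless := ⟨fun x h => by omega⟩

/-- The glue (cut-)vertex `v` of `G(p,q,m,n)`. -/
def glue (p q m n : ℕ) : TBV p q m n := Sum.inr (Sum.inr (Sum.inl ()))

/-!
Every block of `G` is complete bipartite, so `G` is triangle-free. Let `G` have `k` vertices,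
`m` edges and independence number `α`.

Evaluating `A²X = t²X` at a coordinate of maximal modulus gives `t² ≤ ∑_{v ∼ u} deg v` for some
`u`. Since the neighbourhood of `u` is independent, distinct neighbours have disjoint sets of
incident edges, so this sum is at most `m` (Nosal's bound `ρ ≤ √m`).

For a maximum independent set `S`, the vertices of `S` only see `Sᶜ`, so
`2m = ∑_{w ∉ S} (|N(w) ∩ S| + deg w)`, and both summands are at most `α` because every
neighbourhood is independent. Hence `m ≤ α(k - α)`, and equality forces `N(w) = S` for every
`w ∉ S`, i.e. `G ≅ K_{α,k-α}`. Conversely `K_{α,k-α}` has the eigenvalue `√(α(k - α))`, with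
eigenvector `√(k - α)` on one side and `√α` on the other.
-/

open Finset
open scoped Matrix

lemma exists_le_isBlock [Finite V] {G : SimpleGraph V} {T : G.Subgraph} (hT : T.Connected)
    (hT' : ∀ v, ¬ IsCutVtxOfSub T v) : ∃ H, IsBlock G H ∧ T ≤ H := by
  obtain ⟨H, hTH, hmax⟩ := Set.Finite.exists_le_maximal (Set.toFinite
    {H : G.Subgraph | H.Connected ∧ ∀ v, ¬ IsCutVtxOfSub H v}) ⟨hT, hT'⟩
  exact ⟨H, ⟨hmax.1.1, hmax.1.2, fun _ hHH' hc hc' => (hmax.2 ⟨hc, hc'⟩ hHH').antisymm hHH'⟩,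
    hTH⟩

lemma preconnected_coe_of_pairwise_adj {G : SimpleGraph V} {H : G.Subgraph}
    (h : H.verts.Pairwise H.Adj) : H.coe.Preconnected := fun x y =>
  if hxy : x = y then hxy ▸ .refl _
  else SimpleGraph.Adj.reachable (G := H.coe) (h x.2 y.2 (Subtype.coe_ne_coe.mpr hxy))

lemma connected_of_pairwise_adj {G : SimpleGraph V} {H : G.Subgraph} (hne : H.verts.Nonempty)
    (h : H.verts.Pairwise H.Adj) : H.Connected :=
  ⟨(SimpleGraph.connected_iff _).mpr ⟨preconnected_coe_of_pairwise_adj h, hne.to_subtype⟩⟩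

lemma not_isCutVtxOfSub_of_pairwise_adj {G : SimpleGraph V} {H : G.Subgraph}
    (h : H.verts.Pairwise H.Adj) (v : V) : ¬ IsCutVtxOfSub H v := fun hv =>
  hv.2 <| preconnected_coe_of_pairwise_adj fun _ hx _ hy hxy =>
    (H.deleteVerts_adj).mpr ⟨hx.1, hx.2, hy.1, hy.2, h hx.1 hy.1 hxy⟩

theorem IsBiBlockGraph.cliqueFree_three [Finite V] {G : SimpleGraph V} (hG : IsBiBlockGraph G) :
    G.CliqueFree 3 := by
  intro s hs
  obtain ⟨a, b, c, hab, hac, hbc, rfl⟩ := SimpleGraph.is3Clique_iff.mp hs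
  set T := (⊤ : G.Subgraph).induce ({a, b, c} : Finset V)
  have hT : T.verts.Pairwise T.Adj := fun x hx y hy hxy => ⟨hx, hy, hs.isClique hx hy hxy⟩
  have ha : a ∈ T.verts := by simp [T]
  have hb : b ∈ T.verts := by simp [T]
  have hc : c ∈ T.verts := by simp [T]
  -- The triangle has no cut-vertex, so it lies in a block, whose two parts cannot hold it.
  obtain ⟨H, hH, hTH⟩ := exists_le_isBlock (connected_of_pairwise_adj ⟨a, ha⟩ hT)
    (not_isCutVtxOfSub_of_pairwise_adj hT)
  obtain ⟨M, N, -, -, hMN, -, hadj⟩ := hG.2 H hH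
  have h1 := hTH.2 (hT ha hb hab.ne)
  have h2 := hTH.2 (hT ha hc hac.ne)
  have h3 := hTH.2 (hT hb hc hbc.ne)
  rw [hadj] at h1 h2 h3
  have := Set.disjoint_left.mp hMN
  tauto

theorem indepNum_eq_simpleGraph_indepNum [Fintype V] (G : SimpleGraph V) : indepNum G = G.indepNum := by
  unfold indepNum SimpleGraph.indepNum
  congr 1
  ext n
  constructor
  · rintro ⟨s, hs, rfl⟩
    exact ⟨s.toFinite.toFinset, ⟨by rwa [Set.Finite.coe_toFinset],
      (Set.ncard_eq_toFinset_card s).symm⟩⟩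
  · rintro ⟨s, hs, rfl⟩
    exact ⟨s, hs, Set.ncard_coe_finset s⟩

section TriangleFree

variable [Fintype V] {G : SimpleGraph V}

theorem degree_le_indepNum_of_cliqueFree (h : G.CliqueFree 3) (v : V) :
    G.degree v ≤ G.indepNum := by
  rw [← SimpleGraph.card_neighborFinset_eq_degree]
  exact SimpleGraph.IsIndepSet.card_le_indepNum <| by
    simpa using SimpleGraph.isIndepSet_neighborSet_of_triangleFree G h v

theorem sum_degree_neighborFinset_le_card_edgeFinset (h : G.CliqueFree 3) (u : V) :
    ∑ v ∈ G.neighborFinset u, G.degree v ≤ #G.edgeFinset := by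
  have hdisj : (G.neighborFinset u : Set V).PairwiseDisjoint (G.incidenceFinset ·) := by
    intro v hv w hw hvw
    rw [Function.onFun, ← disjoint_coe, SimpleGraph.coe_incidenceFinset,
      SimpleGraph.coe_incidenceFinset, Set.disjoint_iff_inter_eq_empty]
    refine G.incidenceSet_inter_incidenceSet_of_not_adj ?_ hvw
    exact SimpleGraph.isIndepSet_neighborSet_of_triangleFree G h u (by simpa using hv)
      (by simpa using hw) hvw
  calc ∑ v ∈ G.neighborFinset u, G.degree v
      = #((G.neighborFinset u).biUnion (G.incidenceFinset ·)) := by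
        simp [card_biUnion hdisj]
    _ ≤ #G.edgeFinset := card_le_card <| biUnion_subset.mpr fun v _ => G.incidenceFinset_subset v

/-- `G` is complete bipartite with parts `S` and `Sᶜ`. -/
def IsCompleteBipartiteOn (G : SimpleGraph V) (S : Finset V) : Prop :=
  ∀ u v, G.Adj u v ↔ (u ∈ S ↔ v ∉ S)

theorem isCompleteBipartiteOn_of_neighborFinset_eq {S : Finset V} (hS : G.IsIndepSet S)
    (h : ∀ w ∉ S, G.neighborFinset w = S) : IsCompleteBipartiteOn G S := by
  have hout : ∀ u ∉ S, ∀ v, G.Adj u v ↔ v ∈ S := fun u hu v => by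
    rw [← SimpleGraph.mem_neighborFinset, h u hu]
  intro u v
  by_cases hu : u ∈ S
  · by_cases hv : v ∈ S
    · simp only [hu, hv, not_true_eq_false, iff_false]
      exact fun huv => hS hu hv huv.ne huv
    · simp only [hu, hv, not_false_eq_true, iff_true]
      exact ((hout v hv u).mpr hu).symm
  · simp only [hu, false_iff, not_not, hout u hu]

theorem two_mul_card_edgeFinset_eq_sum_compl {S : Finset V} (hS : G.IsIndepSet S) :
    2 * #G.edgeFinset = ∑ w ∈ Sᶜ, (#{v ∈ S | G.Adj v w} + G.degree w) := by
  rw [← G.sum_degrees_eq_twice_card_edges, ← sum_add_sum_compl S, sum_add_distrib]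
  congr 1
  calc ∑ v ∈ S, G.degree v = ∑ v ∈ S, #(Sᶜ.bipartiteAbove G.Adj v) := by
        refine sum_congr rfl fun v hv => ?_
        rw [← SimpleGraph.card_neighborFinset_eq_degree, bipartiteAbove]
        congr 1
        ext w
        simp only [SimpleGraph.mem_neighborFinset, mem_filter, mem_compl, iff_and_self]
        exact fun hvw hw => hS hv hw hvw.ne hvw
    _ = ∑ w ∈ Sᶜ, #(S.bipartiteBelow G.Adj w) :=
        sum_card_bipartiteAbove_eq_sum_card_bipartiteBelow _

theorem card_filter_adj_add_degree_le_of_cliqueFree (h : G.CliqueFree 3) {S : Finset V}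
    (hS : G.IsNIndepSet G.indepNum S) (w : V) :
    #{v ∈ S | G.Adj v w} + G.degree w ≤ 2 * G.indepNum := by
  have := card_filter_le S (G.Adj · w)
  have := degree_le_indepNum_of_cliqueFree h w
  have := hS.card_eq
  omega

theorem card_edgeFinset_le_of_cliqueFree (h : G.CliqueFree 3) :
    #G.edgeFinset ≤ G.indepNum * (Fintype.card V - G.indepNum) := by
  obtain ⟨S, hS⟩ := G.exists_isNIndepSet_indepNum
  have hsum := sum_le_sum fun w (_ : w ∈ Sᶜ) =>
    card_filter_adj_add_degree_le_of_cliqueFree h hS w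
  rw [← two_mul_card_edgeFinset_eq_sum_compl hS.isIndepSet, sum_const, card_compl,
    hS.card_eq, smul_eq_mul] at hsum
  ring_nf at hsum ⊢
  omega

theorem exists_isCompleteBipartiteOn_of_card_edgeFinset_eq (h : G.CliqueFree 3)
    (hE : #G.edgeFinset = G.indepNum * (Fintype.card V - G.indepNum)) :
    ∃ S : Finset V, #S = G.indepNum ∧ IsCompleteBipartiteOn G S := by
  obtain ⟨S, hS⟩ := G.exists_isNIndepSet_indepNum
  have hsum : ∑ w ∈ Sᶜ, (#{v ∈ S | G.Adj v w} + G.degree w) = ∑ w ∈ Sᶜ, 2 * G.indepNum := by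
    rw [← two_mul_card_edgeFinset_eq_sum_compl hS.isIndepSet, hE, sum_const, card_compl,
      hS.card_eq, smul_eq_mul]
    ring
  have hterm := (sum_eq_sum_iff_of_le fun w (_ : w ∈ Sᶜ) =>
    card_filter_adj_add_degree_le_of_cliqueFree h hS w).mp hsum
  refine ⟨S, hS.card_eq, isCompleteBipartiteOn_of_neighborFinset_eq hS.isIndepSet fun w hw => ?_⟩
  have hsum_w := hterm w (mem_compl.mpr hw)
  have hfilter := card_filter_le S (G.Adj · w)
  have hdeg := degree_le_indepNum_of_cliqueFree h w
  have hcard := hS.card_eq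
  have hSw : ∀ v ∈ S, G.Adj v w := card_filter_eq_iff.mp (by omega)
  have hsub : S ⊆ G.neighborFinset w := fun v hv =>
    (G.mem_neighborFinset w v).mpr (hSw v hv).symm
  refine (eq_of_subset_of_card_le hsub ?_).symm
  rw [SimpleGraph.card_neighborFinset_eq_degree]
  omega

end TriangleFree

section Spectral

variable [Fintype V] {G : SimpleGraph V}

theorem adjMat_eq_adjMatrix : adjMat G = G.adjMatrix ℝ := rfl

theorem exists_sq_le_sum_degree_of_mulVec_eq_smul {X : V → ℝ} {t : ℝ} (hX : X ≠ 0)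
    (hAX : G.adjMatrix ℝ *ᵥ X = t • X) :
    ∃ u, t ^ 2 ≤ ∑ v ∈ G.neighborFinset u, (G.degree v : ℝ) := by
  obtain ⟨w, hw⟩ := Function.ne_iff.mp hX
  obtain ⟨u, -, hu⟩ := exists_max_image univ (|X ·|) ⟨w, mem_univ w⟩
  have hXu : 0 < |X u| := (abs_pos.mpr hw).trans_le (hu w (mem_univ w))
  refine ⟨u, le_of_mul_le_mul_right ?_ hXu⟩
  calc t ^ 2 * |X u| = |(G.adjMatrix ℝ *ᵥ (G.adjMatrix ℝ *ᵥ X)) u| := by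
        rw [hAX, Matrix.mulVec_smul, hAX, smul_smul, Pi.smul_apply, smul_eq_mul, abs_mul,
          abs_of_nonneg (mul_self_nonneg t), sq]
    _ = |∑ v ∈ G.neighborFinset u, ∑ w ∈ G.neighborFinset v, X w| := by
        simp only [SimpleGraph.adjMatrix_mulVec_apply]
    _ ≤ ∑ v ∈ G.neighborFinset u, ∑ w ∈ G.neighborFinset v, |X w| :=
        (abs_sum_le_sum_abs _ _).trans (sum_le_sum fun v _ => abs_sum_le_sum_abs _ _)
    _ ≤ ∑ v ∈ G.neighborFinset u, ∑ w ∈ G.neighborFinset v, |X u| :=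
        sum_le_sum fun v _ => sum_le_sum fun w _ => hu w (mem_univ w)
    _ = (∑ v ∈ G.neighborFinset u, (G.degree v : ℝ)) * |X u| := by
        simp [sum_mul]

theorem sq_le_card_edgeFinset_of_cliqueFree (h : G.CliqueFree 3) {X : V → ℝ} {t : ℝ}
    (hX : X ≠ 0) (hAX : adjMat G *ᵥ X = t • X) : t ^ 2 ≤ #G.edgeFinset := by
  obtain ⟨u, hu⟩ := exists_sq_le_sum_degree_of_mulVec_eq_smul hX hAX
  exact hu.trans (mod_cast sum_degree_neighborFinset_le_card_edgeFinset h u)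

theorem specRad_le_sqrt_card_edgeFinset (h : G.CliqueFree 3) :
    specRad G ≤ √(#G.edgeFinset : ℝ) :=
  Real.sSup_le (fun _ ⟨_, hX, hAX⟩ =>
    Real.le_sqrt_of_sq_le (sq_le_card_edgeFinset_of_cliqueFree h hX hAX)) (Real.sqrt_nonneg _)

theorem le_specRad_of_mulVec_eq_smul (h : G.CliqueFree 3) {X : V → ℝ} {t : ℝ} (hX : X ≠ 0)
    (hAX : adjMat G *ᵥ X = t • X) : t ≤ specRad G :=
  le_csSup ⟨_, fun _ ⟨_, hX, hAX⟩ =>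
    Real.le_sqrt_of_sq_le (sq_le_card_edgeFinset_of_cliqueFree h hX hAX)⟩ ⟨X, hX, hAX⟩

end Spectral

namespace IsCompleteBipartiteOn

variable [Fintype V] {G : SimpleGraph V} {S : Finset V}

theorem neighborFinset_eq (hS : IsCompleteBipartiteOn G S) (v : V) :
    G.neighborFinset v = if v ∈ S then Sᶜ else S := by
  ext w
  split_ifs with hv <;> simp [hS v w, hv]

theorem nonempty_of_adj (hS : IsCompleteBipartiteOn G S) {u v : V} (huv : G.Adj u v) :
    S.Nonempty ∧ Sᶜ.Nonempty := by
  have huv' := (hS u v).mp huv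
  by_cases hu : u ∈ S
  · exact ⟨⟨u, hu⟩, ⟨v, mem_compl.mpr (huv'.mp hu)⟩⟩
  · exact ⟨⟨v, not_not.mp (mt huv'.mpr hu)⟩, ⟨u, mem_compl.mpr hu⟩⟩

theorem exists_mulVec_eq_smul (hS : IsCompleteBipartiteOn G S) (hS₀ : S.Nonempty)
    (hS₁ : Sᶜ.Nonempty) : ∃ X ≠ 0, adjMat G *ᵥ X = √((#S * #Sᶜ : ℕ) : ℝ) • X := by
  refine ⟨fun v => if v ∈ S then √(#Sᶜ : ℝ) else √(#S : ℝ), ?_, ?_⟩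
  · obtain ⟨v, hv⟩ := hS₀
    refine Function.ne_iff.mpr ⟨v, ?_⟩
    simpa [hv] using hS₁.card_pos.ne'
  · funext v
    rw [adjMat_eq_adjMatrix, SimpleGraph.adjMatrix_mulVec_apply, hS.neighborFinset_eq]
    by_cases hv : v ∈ S
    · simp only [hv, if_true, Pi.smul_apply, smul_eq_mul, Nat.cast_mul]
      rw [sum_congr rfl fun w hw => if_neg (mem_compl.mp hw), sum_const, nsmul_eq_mul,
        Real.sqrt_mul (Nat.cast_nonneg _), mul_assoc, Real.mul_self_sqrt (Nat.cast_nonneg _),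
        mul_comm]
    · simp only [hv, if_false, Pi.smul_apply, smul_eq_mul, Nat.cast_mul]
      rw [sum_congr rfl fun w hw => if_pos hw, sum_const, nsmul_eq_mul,
        Real.sqrt_mul (Nat.cast_nonneg _), mul_right_comm, Real.mul_self_sqrt (Nat.cast_nonneg _)]

theorem nonempty_iso (hS : IsCompleteBipartiteOn G S) :
    Nonempty (G ≃g completeBipartiteGraph (Fin #S) (Fin (Fintype.card V - #S))) := by
  let e : G ≃g completeBipartiteGraph {v // v ∈ S} {v // v ∉ S} :=
    { toEquiv := (Equiv.sumCompl (· ∈ S)).symm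
      map_rel_iff' := fun {u v} => by
        by_cases hu : u ∈ S <;> by_cases hv : v ∈ S <;>
          simp [Equiv.sumCompl_symm_apply_of_pos, Equiv.sumCompl_symm_apply_of_neg, hu, hv,
            hS u v] }
  exact ⟨e.trans (SimpleGraph.completeBipartiteGraphCongr (Fintype.equivFinOfCardEq (by simp))
    (Fintype.equivFinOfCardEq (by simp [Fintype.card_subtype_compl])))⟩

end IsCompleteBipartiteOn

theorem exists_isCompleteBipartiteOn_of_iso [Fintype V] {G : SimpleGraph V} {α β : Type*}
    [Fintype α] (e : G ≃g completeBipartiteGraph α β) :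
    ∃ S : Finset V, #S = Fintype.card α ∧ IsCompleteBipartiteOn G S := by
  set S := univ.map (Function.Embedding.inl.trans e.symm.toEquiv.toEmbedding)
  refine ⟨S, by simp [S], fun u v => ?_⟩
  have hmem : ∀ x, x ∈ S ↔ (e x).isLeft := fun x => by
    simp only [S, mem_map, mem_univ, true_and, Function.Embedding.trans_apply]
    refine ⟨?_, fun h => ?_⟩
    · rintro ⟨a, rfl⟩
      simp
    · obtain ⟨a, ha⟩ := Sum.isLeft_iff.mp h
      exact ⟨a, by simp [← ha]⟩
  rw [hmem, hmem, ← e.map_adj_iff]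
  rcases e u with a | b <;> rcases e v with c | d <;> simp [completeBipartiteGraph]

theorem biBlock_blockIndexTwo_specRad_le_and_eq_iff_general {V : Type*} [Fintype V]
    (G : SimpleGraph V) (k : ℕ) (hk : Fintype.card V = k) (hk2 : 2 ≤ k)
    (hG : IsBiBlockGraph G)
    (α : ℕ) (hα : α = indepNum G) :
    specRad G ≤ Real.sqrt ((α : ℝ) * ((k : ℝ) - (α : ℝ))) ∧
      (specRad G = Real.sqrt ((α : ℝ) * ((k : ℝ) - (α : ℝ))) ↔
        Nonempty (G ≃g completeBipartiteGraph (Fin α) (Fin (k - α)))) := by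
  subst hk
  obtain rfl : α = G.indepNum := hα.trans (indepNum_eq_simpleGraph_indepNum G)
  have htf := hG.cliqueFree_three
  have hαn : G.indepNum ≤ Fintype.card V := by
    obtain ⟨S, hS⟩ := G.exists_isNIndepSet_indepNum
    exact hS.card_eq ▸ card_le_univ S
  rw [← Nat.cast_sub hαn, ← Nat.cast_mul]
  have hE := card_edgeFinset_le_of_cliqueFree htf
  have hρ := specRad_le_sqrt_card_edgeFinset htf
  have hle := hρ.trans (Real.sqrt_le_sqrt (Nat.cast_le.mpr hE))
  refine ⟨hle, fun heq => ?_, fun ⟨e⟩ => le_antisymm hle ?_⟩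
  · have hE' := (Real.sqrt_le_sqrt_iff (Nat.cast_nonneg _)).mp (heq ▸ hρ)
    obtain ⟨S, hS, hSb⟩ :=
      exists_isCompleteBipartiteOn_of_card_edgeFinset_eq htf (hE.antisymm (mod_cast hE'))
    exact hS ▸ hSb.nonempty_iso
  · obtain ⟨S, hS, hSb⟩ := exists_isCompleteBipartiteOn_of_iso e
    rw [Fintype.card_fin] at hS
    have : Nontrivial V := Fintype.one_lt_card_iff_nontrivial.mp hk2
    obtain ⟨w, hw⟩ := hG.1.preconnected.exists_adj_of_nontrivial hG.1.nonempty.some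
    obtain ⟨hS₀, hS₁⟩ := hSb.nonempty_of_adj hw
    obtain ⟨X, hX, hAX⟩ := hSb.exists_mulVec_eq_smul hS₀ hS₁
    rw [card_compl, hS] at hAX
    exact le_specRad_of_mulVec_eq_smul htf hX hAX

/-- For a bi-block graph `G` on `k ≥ 2` vertices with independence
number `α` in which every cut-vertex has block index exactly `2`, one has
`ρ(G) ≤ √(α(k-α))`, with equality iff `G ≅ K_{α,k-α}`. -/
theorem biBlock_blockIndexTwo_specRad_le_and_eq_iff {V : Type*} [Fintype V]
    (G : SimpleGraph V) (k : ℕ) (hk : Fintype.card V = k) (hk2 : 2 ≤ k)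
    (hG : IsBiBlockGraph G)
    (hbi : ∀ v : V, IsCutVertex G v → blockIndex G v = 2)
    (α : ℕ) (hα : α = indepNum G) :
    specRad G ≤ Real.sqrt ((α : ℝ) * ((k : ℝ) - (α : ℝ))) ∧
      (specRad G = Real.sqrt ((α : ℝ) * ((k : ℝ) - (α : ℝ))) ↔
        Nonempty (G ≃g completeBipartiteGraph (Fin α) (Fin (k - α)))) :=
  biBlock_blockIndexTwo_specRad_le_and_eq_iff_general G k hk hk2 hG α hα

end BiBlockPaper
end
end

section
/- With the attached-block setup, let I be a maximum independent set of G. Then α(G−H) = |I ∩ A| + 1 if v ∉ I and I|_{G−H} = I ∩ A is not a maximum independent set of G−H, and α(G−H) = |I ∩ A| otherwise (i.e., if v ∈ I, or if I ∩ A is a maximum independent set of G−H). -/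
open scoped Classical

noncomputable section

namespace BiBlockPaper

variable {V : Type*}

/-!
If `J` is an independent set of `G - H`, then `(J \ {v}) ∪ (I ∩ (B \ {v}))` is independent in `G`,
because `A \ {v}` and `B \ {v}` are not joined by edges. Comparing it with the maximum set
`I = (I ∩ A) ∪ (I ∩ (B \ {v}))` gives `|J| - 1 ≤ |I ∩ A|`. When `v ∈ I`, the vertex `v` has no
neighbour in `I`, so `J` itself can be exchanged and `|J| ≤ |I ∩ A|`.
-/

variable {G : SimpleGraph V}

lemma IsIndep.mono {s t : Set V} (ht : IsIndep G t) (hst : s ⊆ t) : IsIndep G s :=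
  Set.Pairwise.mono hst ht

lemma IsIndep.union {s t : Set V} (hs : IsIndep G s) (ht : IsIndep G t)
    (hst : ∀ x ∈ s, ∀ y ∈ t, ¬ G.Adj x y) : IsIndep G (s ∪ t) :=
  Set.pairwise_union.2 ⟨hs, ht, fun x hx y hy _ => ⟨hst x hx y hy, fun h => hst x hx y hy h.symm⟩⟩

section indepNum

variable [Fintype V]

lemma indepNum_bddAbove (G : SimpleGraph V) :
    BddAbove {k : ℕ | ∃ s : Set V, IsIndep G s ∧ s.ncard = k} :=
  ⟨Fintype.card V, by
    rintro k ⟨s, -, rfl⟩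
    exact (Set.ncard_le_ncard (Set.subset_univ s)).trans_eq (by simp)⟩

lemma ncard_le_indepNum {s : Set V} (hs : IsIndep G s) : s.ncard ≤ indepNum G :=
  le_csSup (indepNum_bddAbove G) ⟨s, hs, rfl⟩

lemma indepNum_le {k : ℕ} (h : ∀ s, IsIndep G s → s.ncard ≤ k) : indepNum G ≤ k :=
  csSup_le' <| by
    rintro _ ⟨s, hs, rfl⟩
    exact h s hs

lemma ncard_le_indepNum_induce {A J : Set V} (hJA : J ⊆ A) (hJ : IsIndep G J) :
    J.ncard ≤ indepNum (G.induce A) := by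
  have hJ' : IsIndep (G.induce A) (Subtype.val ⁻¹' J) :=
    fun x hx y hy hne => hJ hx hy (Subtype.val_injective.ne hne)
  have hcard : (Subtype.val ⁻¹' J : Set A).ncard = J.ncard := by
    rw [← Set.ncard_image_of_injective _ Subtype.val_injective,
      Set.image_preimage_eq_of_subset (by simpa using hJA)]
  exact hcard ▸ ncard_le_indepNum hJ'

lemma indepNum_induce_le {A : Set V} {k : ℕ}
    (h : ∀ J ⊆ A, IsIndep G J → J.ncard ≤ k) : indepNum (G.induce A) ≤ k := by
  refine indepNum_le fun s hs => ?_
  have hs' : IsIndep G (Subtype.val '' s) := by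
    rintro _ ⟨x, hx, rfl⟩ _ ⟨y, hy, rfl⟩ hne
    exact hs hx hy (ne_of_apply_ne _ hne)
  simpa [Set.ncard_image_of_injective _ Subtype.val_injective] using
    h _ (Subtype.coe_image_subset A s) hs'

lemma ncard_le_ncard_sdiff_of_isIndep_union {I K X : Set V} (hImax : I.ncard = indepNum G)
    (hKX : Disjoint K X) (hindep : IsIndep G (K ∪ (I ∩ X))) : K.ncard ≤ (I \ X).ncard := by
  have hdisj : Disjoint K (I ∩ X) := hKX.mono_right Set.inter_subset_right
  have := ncard_le_indepNum hindep
  rw [Set.ncard_union_eq hdisj, ← hImax, ← Set.ncard_inter_add_ncard_sdiff_eq_ncard I X] at this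
  omega

end indepNum

section attached

variable [Fintype V] {A B : Set V} {v : V} {I : Set V}

lemma ncard_le_ncard_inter_of_isIndep_union (hcover : A ∪ B = Set.univ) (hAB : A ∩ B = {v})
    (hImax : I.ncard = indepNum G) {K : Set V} (hKA : K ⊆ A)
    (hindep : IsIndep G (K ∪ (I ∩ (B \ {v})))) : K.ncard ≤ (I ∩ A).ncard := by
  have hA : A = (B \ {v})ᶜ := by
    ext x
    have hx₁ := Set.ext_iff.1 hcover x
    have hx₂ := Set.ext_iff.1 hAB x
    simp only [Set.mem_union, Set.mem_inter_iff, Set.mem_univ, Set.mem_singleton_iff] at hx₁ hx₂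
    simp only [Set.mem_compl_iff, Set.mem_sdiff, Set.mem_singleton_iff]
    tauto
  rw [hA, ← Set.sdiff_eq]
  exact ncard_le_ncard_sdiff_of_isIndep_union hImax
    (Set.subset_compl_iff_disjoint_right.1 (hA ▸ hKA)) hindep

variable (hcover : A ∪ B = Set.univ) (hAB : A ∩ B = {v})
  (hsep : ∀ a ∈ A \ {v}, ∀ b ∈ B \ {v}, ¬ G.Adj a b)
  (hI : IsIndep G I) (hImax : I.ncard = indepNum G)
include hcover hAB hsep hI hImax

lemma indepNum_induce_le_ncard_inter_add_one :
    indepNum (G.induce A) ≤ (I ∩ A).ncard + 1 := by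
  refine indepNum_induce_le fun J hJA hJ => ?_
  have hindep : IsIndep G ((J \ {v}) ∪ (I ∩ (B \ {v}))) :=
    (hJ.mono Set.sdiff_subset).union (hI.mono Set.inter_subset_left)
      fun x hx y hy => hsep x ⟨hJA hx.1, hx.2⟩ y hy.2
  have := ncard_le_ncard_inter_of_isIndep_union hcover hAB hImax
    (Set.sdiff_subset.trans hJA) hindep
  have := Set.pred_ncard_le_ncard_sdiff_singleton J v
  omega

lemma indepNum_induce_le_ncard_inter_of_mem (hvI : v ∈ I) :
    indepNum (G.induce A) ≤ (I ∩ A).ncard := by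
  refine indepNum_induce_le fun J hJA hJ => ?_
  refine ncard_le_ncard_inter_of_isIndep_union hcover hAB hImax hJA
    (hJ.union (hI.mono Set.inter_subset_left) fun x hx y hy => ?_)
  obtain ⟨hyI, hyB, hyv⟩ := hy
  by_cases hxv : x = v
  · subst hxv
    exact hI hvI hyI (Ne.symm hyv)
  · exact hsep x ⟨hJA hx, hxv⟩ y ⟨hyB, hyv⟩

end attached

theorem attached_indepNum_restriction_general {V : Type*} [Fintype V] (G : SimpleGraph V)
    (A B : Set V) (v : V) (hcover : A ∪ B = Set.univ) (hAB : A ∩ B = {v})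
    (hsep : ∀ a ∈ A \ {v}, ∀ b ∈ B \ {v}, ¬ G.Adj a b)
    (I : Set V) (hI : IsIndep G I) (hImax : I.ncard = indepNum G) :
    (v ∉ I ∧ (I ∩ A).ncard ≠ indepNum (G.induce A) →
        indepNum (G.induce A) = (I ∩ A).ncard + 1) ∧
    (v ∈ I ∨ (I ∩ A).ncard = indepNum (G.induce A) →
        indepNum (G.induce A) = (I ∩ A).ncard) := by
  have hle : (I ∩ A).ncard ≤ indepNum (G.induce A) :=
    ncard_le_indepNum_induce Set.inter_subset_right (hI.mono Set.inter_subset_left)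
  have hle_succ := indepNum_induce_le_ncard_inter_add_one hcover hAB hsep hI hImax
  refine ⟨fun ⟨_, hne⟩ => by omega, ?_⟩
  rintro (hvI | heq)
  · exact le_antisymm (indepNum_induce_le_ncard_inter_of_mem hcover hAB hsep hI hImax hvI) hle
  · exact heq.symm

/-- in the attached-block setup, for a maximum independent set `I` of
`G`, the independence number of `G - H` equals `|I ∩ A| + 1` if `v ∉ I` and
`I ∩ A` is not a maximum independent set of `G - H`, and equals `|I ∩ A|`
otherwise. -/
theorem attached_indepNum_restriction {V : Type*} [Fintype V] (G : SimpleGraph V)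
    (A B : Set V) (v : V) (hcover : A ∪ B = Set.univ) (hAB : A ∩ B = {v})
    (hvB : v ∈ B)
    (hsep : ∀ a ∈ A \ {v}, ∀ b ∈ B \ {v}, ¬ G.Adj a b)
    (M N : Set V) (hM : M.Nonempty) (hN : N.Nonempty) (hMN : Disjoint M N)
    (hMNB : M ∪ N = B)
    (hbip : ∀ u ∈ B, ∀ w ∈ B, (G.Adj u w ↔ (u ∈ M ∧ w ∈ N) ∨ (u ∈ N ∧ w ∈ M)))
    (I : Set V) (hI : IsIndep G I) (hImax : I.ncard = indepNum G) :
    (v ∉ I ∧ (I ∩ A).ncard ≠ indepNum (G.induce A) →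
        indepNum (G.induce A) = (I ∩ A).ncard + 1) ∧
    (v ∈ I ∨ (I ∩ A).ncard = indepNum (G.induce A) →
        indepNum (G.induce A) = (I ∩ A).ncard) :=
  attached_indepNum_restriction_general G A B v hcover hAB hsep I hI hImax

end BiBlockPaper
end
end

section
/- For all positive integers p, q, m, n, if ρ denotes the spectral radius of G(p,q,m,n), then (ρ² − pq)(ρ² − mn) = pn. -/
open scoped Classical

noncomputable section

/-!
The spectral radius `ρ` of `G(p,q,m,n)` is the largest eigenvalue of its symmetric, nonnegative
adjacency matrix, and it has a nonnegative eigenvector `x`: replacing a top eigenvector by its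
entrywise absolute value cannot lower the Rayleigh quotient, so the maximum is still attained.
Summing the eigen-equations of `x` over `P`, `Q \ {v}`, `{v}`, `M \ {v}` and `N` gives five
linear equations in the part sums `a, b, c, d, e`; eliminating `b`, `c`, `d` leaves
`(ρ² - pq) a = p e` and `(ρ² - mn) e = n a`, and nonnegativity of `x` forces `a e ≠ 0`.
-/

namespace Matrix

variable {n : Type*} [Fintype n] {A : Matrix n n ℝ}

lemma mul_sum_eq_of_mulVec_eq_smul {x : n → ℝ} {t : ℝ} (hx : A *ᵥ x = t • x) {k : ℕ}
    (f : Fin k → n) {c : ℝ} (hc : ∀ j, (A *ᵥ x) (f j) = c) :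
    t * ∑ j, x (f j) = k * c := by
  have h : ∀ j, t * x (f j) = c := fun j => by rw [← hc j, hx]; rfl
  simp [Finset.mul_sum, h]

lemma dotProduct_mulVec_le_abs (hA : ∀ i j, 0 ≤ A i j) (x : n → ℝ) :
    x ⬝ᵥ (A *ᵥ x) ≤ |x| ⬝ᵥ (A *ᵥ |x|) := by
  simp only [dotProduct, mulVec, Finset.mul_sum, Pi.abs_apply]
  refine Finset.sum_le_sum fun i _ => Finset.sum_le_sum fun j _ => ?_
  calc x i * (A i j * x j) ≤ |x i * (A i j * x j)| := le_abs_self _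
    _ = |x i| * (A i j * |x j|) := by rw [abs_mul, abs_mul, abs_of_nonneg (hA i j)]

namespace IsHermitian

variable [DecidableEq n] (hA : A.IsHermitian)
include hA

lemma eigenvectorBasis_ne_zero (i : n) : (hA.eigenvectorBasis i).ofLp ≠ 0 := fun h =>
  hA.eigenvectorBasis.orthonormal.ne_zero i (by simpa using h)

lemma dotProduct_eq_sum_eigenvectorBasis (x y : n → ℝ) :
    x ⬝ᵥ y = ∑ j, (hA.eigenvectorBasis j ⬝ᵥ x) * (hA.eigenvectorBasis j ⬝ᵥ y) := by
  simpa [EuclideanSpace.inner_eq_star_dotProduct, dotProduct_comm] using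
    (hA.eigenvectorBasis.sum_inner_mul_inner (WithLp.toLp 2 x) (WithLp.toLp 2 y)).symm

lemma eigenvectorBasis_dotProduct_mulVec (j : n) (x : n → ℝ) :
    hA.eigenvectorBasis j ⬝ᵥ (A *ᵥ x) =
      hA.eigenvalues j * (hA.eigenvectorBasis j ⬝ᵥ x) := by
  have hAT : Aᵀ = A := by rw [← conjTranspose_eq_transpose_of_trivial]; exact hA
  rw [dotProduct_mulVec, ← mulVec_transpose, hAT, hA.mulVec_eigenvectorBasis, smul_dotProduct,
    smul_eq_mul]

lemma mul_dotProduct_sub_dotProduct_mulVec (t : ℝ) (x : n → ℝ) :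
    t * (x ⬝ᵥ x) - x ⬝ᵥ (A *ᵥ x) =
      ∑ j, (t - hA.eigenvalues j) * (hA.eigenvectorBasis j ⬝ᵥ x) ^ 2 := by
  rw [hA.dotProduct_eq_sum_eigenvectorBasis x x, hA.dotProduct_eq_sum_eigenvectorBasis x (A *ᵥ x),
    Finset.mul_sum, ← Finset.sum_sub_distrib]
  refine Finset.sum_congr rfl fun j _ => ?_
  rw [eigenvectorBasis_dotProduct_mulVec]
  ring

variable {t : ℝ} (ht : ∀ j, hA.eigenvalues j ≤ t)
include ht

lemma dotProduct_mulVec_le (x : n → ℝ) : x ⬝ᵥ (A *ᵥ x) ≤ t * (x ⬝ᵥ x) := by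
  have hsum := hA.mul_dotProduct_sub_dotProduct_mulVec t x
  have hnonneg : 0 ≤ ∑ j, (t - hA.eigenvalues j) * (hA.eigenvectorBasis j ⬝ᵥ x) ^ 2 :=
    Finset.sum_nonneg fun j _ => mul_nonneg (sub_nonneg.2 (ht j)) (sq_nonneg _)
  linarith

lemma le_of_mulVec_eq_smul {s : ℝ} {x : n → ℝ} (hx : x ≠ 0) (hs : A *ᵥ x = s • x) :
    s ≤ t := by
  have hxx : 0 < x ⬝ᵥ x := lt_of_le_of_ne (Fintype.sum_nonneg fun i => mul_self_nonneg (x i))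
    (Ne.symm (dotProduct_self_eq_zero.not.2 hx))
  have hle := hA.dotProduct_mulVec_le ht x
  rw [hs, dotProduct_smul, smul_eq_mul] at hle
  exact le_of_mul_le_mul_right hle hxx

lemma mulVec_eq_smul_of_dotProduct_mulVec_eq {x : n → ℝ}
    (hx : x ⬝ᵥ (A *ᵥ x) = t * (x ⬝ᵥ x)) : A *ᵥ x = t • x := by
  have hsum := hA.mul_dotProduct_sub_dotProduct_mulVec t x
  rw [hx, sub_self, eq_comm, Finset.sum_eq_zero_iff_of_nonneg fun j _ =>
    mul_nonneg (sub_nonneg.2 (ht j)) (sq_nonneg _)] at hsum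
  rw [← sub_eq_zero, ← dotProduct_self_eq_zero, hA.dotProduct_eq_sum_eigenvectorBasis]
  refine Finset.sum_eq_zero fun j _ => ?_
  have hj : (t - hA.eigenvalues j) * (hA.eigenvectorBasis j ⬝ᵥ x) = 0 := by
    simpa [sq, ← mul_assoc] using hsum j (Finset.mem_univ j)
  rw [dotProduct_sub, eigenvectorBasis_dotProduct_mulVec, dotProduct_smul, smul_eq_mul]
  linear_combination ((t - hA.eigenvalues j) * (hA.eigenvectorBasis j ⬝ᵥ x)) * hj

omit ht in
lemma isGreatest_eigenvalue {i : n} (hi : ∀ j, hA.eigenvalues j ≤ hA.eigenvalues i) :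
    IsGreatest {s : ℝ | ∃ x : n → ℝ, x ≠ 0 ∧ A *ᵥ x = s • x} (hA.eigenvalues i) :=
  ⟨⟨_, hA.eigenvectorBasis_ne_zero i, hA.mulVec_eigenvectorBasis i⟩,
    fun _ ⟨_, hx, hs⟩ => hA.le_of_mulVec_eq_smul hi hx hs⟩

omit ht in
theorem mulVec_abs_eigenvectorBasis (hA₀ : ∀ i j, 0 ≤ A i j) {i : n}
    (hi : ∀ j, hA.eigenvalues j ≤ hA.eigenvalues i) :
    A *ᵥ |(hA.eigenvectorBasis i).ofLp| =
      hA.eigenvalues i • |(hA.eigenvectorBasis i).ofLp| := by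
  set v := (hA.eigenvectorBasis i).ofLp
  refine hA.mulVec_eq_smul_of_dotProduct_mulVec_eq hi
    (le_antisymm (hA.dotProduct_mulVec_le hi _) ?_)
  have hvv : |v| ⬝ᵥ |v| = v ⬝ᵥ v := by simp [dotProduct, Pi.abs_apply, abs_mul_abs_self]
  calc hA.eigenvalues i * (|v| ⬝ᵥ |v|) = v ⬝ᵥ (A *ᵥ v) := by
        rw [hvv, hA.mulVec_eigenvectorBasis i, dotProduct_smul, smul_eq_mul]
    _ ≤ |v| ⬝ᵥ (A *ᵥ |v|) := dotProduct_mulVec_le_abs hA₀ v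

end IsHermitian

end Matrix

namespace BiBlockPaper

open Matrix

section SpectralRadius

variable {V : Type*} [Fintype V]

lemma adjMat_isHermitian (G : SimpleGraph V) : (adjMat G).IsHermitian := by
  ext i j
  simp [adjMat, G.adj_comm]

lemma adjMat_nonneg (G : SimpleGraph V) (i j : V) : 0 ≤ adjMat G i j := by
  unfold adjMat; split_ifs <;> norm_num

theorem exists_nonneg_eigenvector_specRad [Nonempty V] (G : SimpleGraph V) :
    ∃ x : V → ℝ, 0 < x ∧ adjMat G *ᵥ x = specRad G • x := by
  have hA := adjMat_isHermitian G
  obtain ⟨i, -, hi⟩ := Finset.exists_max_image Finset.univ hA.eigenvalues Finset.univ_nonempty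
  have hi' : ∀ j, hA.eigenvalues j ≤ hA.eigenvalues i := fun j => hi j (Finset.mem_univ j)
  have hv : 0 < |(hA.eigenvectorBasis i).ofLp| :=
    lt_of_le_of_ne (abs_nonneg _) fun h => hA.eigenvectorBasis_ne_zero i <|
      funext fun j => by simpa using (congrFun h j).symm
  rw [specRad, (hA.isGreatest_eigenvalue hi').csSup_eq]
  exact ⟨_, hv, hA.mulVec_abs_eigenvectorBasis (adjMat_nonneg G) hi'⟩

end SpectralRadius

theorem twoBlock_quotient_identity {p q m n t a b c d e : ℝ} (hp : 0 < p) (hn : 0 < n)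
    (hc : 0 ≤ c) (hpos : 0 < a + b + c + d + e)
    (hP : t * a = p * (b + c)) (hQ : t * b = (q - 1) * a) (hv : t * c = a + e)
    (hM : t * d = (m - 1) * e) (hN : t * e = n * (c + d)) :
    (t ^ 2 - p * q) * (t ^ 2 - m * n) = p * n := by
  have hae : (t ^ 2 - p * q) * a = p * e := by linear_combination t * hP + p * hQ + p * hv
  have hea : (t ^ 2 - m * n) * e = n * a := by linear_combination t * hN + n * hv + n * hM
  have hae₀ : a * e ≠ 0 := by
    intro h
    obtain ⟨rfl, rfl⟩ : a = 0 ∧ e = 0 := by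
      rcases mul_eq_zero.1 h with rfl | rfl
      · exact ⟨rfl, by simpa [hp.ne'] using hae.symm⟩
      · exact ⟨by simpa [hn.ne'] using hea.symm, rfl⟩
    have hbc : b + c = 0 := by simpa [hp.ne'] using hP.symm
    have hcd : c + d = 0 := by simpa [hn.ne'] using hN.symm
    linarith
  refine mul_right_cancel₀ hae₀ ?_
  linear_combination (t ^ 2 - m * n) * e * hae + p * e * hea

open Sum

section TwoBlock

variable {p q m n : ℕ} {X : TBV p q m n → ℝ}

-- The sums of `X` over `P`, `Q \ {v}`, `M \ {v}` and `N`; the glue vertex `v` is kept apart.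
def sumP (X : TBV p q m n → ℝ) : ℝ := ∑ j, X (inl j)
def sumQ (X : TBV p q m n → ℝ) : ℝ := ∑ j, X (inr (inl j))
def sumM (X : TBV p q m n → ℝ) : ℝ := ∑ j, X (inr (inr (inr (inl j))))
def sumN (X : TBV p q m n → ℝ) : ℝ := ∑ j, X (inr (inr (inr (inr j))))

lemma sum_eq_partSums : ∑ x, X x = sumP X + sumQ X + X (glue p q m n) + sumM X + sumN X := by
  simp only [Fintype.sum_sum_type, Finset.univ_unique, PUnit.default_eq_unit,
    Finset.sum_singleton, sumP, sumQ, glue, sumM, sumN]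
  ring

variable {t : ℝ} (hX : adjMat (twoBlock p q m n) *ᵥ X = t • X)
include hX

lemma twoBlock_eigen_P : t * sumP X = p * (sumQ X + X (glue p q m n)) :=
  mul_sum_eq_of_mulVec_eq_smul hX _ fun _ => by
    simp [adjMat, twoBlock, part, glue, sumQ, mulVec, dotProduct, Fintype.sum_sum_type]

lemma twoBlock_eigen_Q (hq : 0 < q) : t * sumQ X = (q - 1) * sumP X := by
  have h := mul_sum_eq_of_mulVec_eq_smul hX (fun j : Fin (q - 1) => inr (inl j))
    (c := sumP X) fun _ => by
      simp [adjMat, twoBlock, part, sumP, mulVec, dotProduct, Fintype.sum_sum_type]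
  rwa [Nat.cast_sub hq, Nat.cast_one] at h

lemma twoBlock_eigen_glue : t * X (glue p q m n) = sumP X + sumN X := by
  rw [← smul_eq_mul, ← Pi.smul_apply, ← hX]
  simp [adjMat, twoBlock, part, glue, sumP, sumN, mulVec, dotProduct, Fintype.sum_sum_type]

lemma twoBlock_eigen_M (hm : 0 < m) : t * sumM X = (m - 1) * sumN X := by
  have h := mul_sum_eq_of_mulVec_eq_smul hX (fun j : Fin (m - 1) => inr (inr (inr (inl j))))
    (c := sumN X) fun _ => by
      simp [adjMat, twoBlock, part, sumN, mulVec, dotProduct, Fintype.sum_sum_type]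
  rwa [Nat.cast_sub hm, Nat.cast_one] at h

lemma twoBlock_eigen_N : t * sumN X = n * (X (glue p q m n) + sumM X) :=
  mul_sum_eq_of_mulVec_eq_smul hX _ fun _ => by
    simp [adjMat, twoBlock, part, glue, sumM, mulVec, dotProduct, Fintype.sum_sum_type]

end TwoBlock

/-- if `ρ` is the spectral radius of `G(p,q,m,n)` then
`(ρ² - pq)(ρ² - mn) = pn`. -/
theorem twoBlock_specRad_identity (p q m n : ℕ)
    (hp : 0 < p) (hq : 0 < q) (hm : 0 < m) (hn : 0 < n) :
    (specRad (twoBlock p q m n) ^ 2 - (p : ℝ) * q) *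
      (specRad (twoBlock p q m n) ^ 2 - (m : ℝ) * n) = (p : ℝ) * n := by
  obtain ⟨X, hX, hXeig⟩ := exists_nonneg_eigenvector_specRad (twoBlock p q m n)
  have hpos : 0 < sumP X + sumQ X + X (glue p q m n) + sumM X + sumN X := by
    rw [← sum_eq_partSums]
    exact Fintype.sum_pos hX
  exact twoBlock_quotient_identity (by exact_mod_cast hp) (by exact_mod_cast hn) (hX.le _) hpos
    (twoBlock_eigen_P hXeig) (twoBlock_eigen_Q hXeig hq) (twoBlock_eigen_glue hXeig)
    (twoBlock_eigen_M hXeig hm) (twoBlock_eigen_N hXeig)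

end BiBlockPaper
end
end

section
/- Let p, q, m, n be positive integers with p < q − 1 and n > m. Then the spectral radius of G(p,q,m,n) is strictly less than sqrt((p+m)(q+n−1)), i.e., strictly less than the spectral radius of the complete bipartite graph K_{p+m, q+n−1}. -/
/-!
Summing an eigenvector of `G(p,q,m,n)` with eigenvalue `t ≠ 0` over the five parts
`P, Q \ {v}, {v}, M \ {v}, N` gives a nonzero eigenvector of the `5 × 5` quotient matrix, and
eliminating the part sums yields `(t² - pq)(t² - nm) = pn`. Hence `t²` is at most the larger
root `r` of this quadratic, and `r < T := (p+m)(q+n-1)` because `T` lies to the right of both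
`pq` and `nm` and the quadratic is already positive there.
-/

open scoped Classical

noncomputable section

namespace BiBlockPaper

variable {V : Type*}

open Finset
open scoped Matrix

theorem specRad_le_of_forall_pos_eigenvalue_le [Fintype V] (G : SimpleGraph V) {C : ℝ}
    (hC : 0 ≤ C) (h : ∀ (t : ℝ) (X : V → ℝ), X ≠ 0 → adjMat G *ᵥ X = t • X → 0 < t → t ≤ C) :
    specRad G ≤ C :=
  Real.sSup_le (fun t ⟨X, hX, hAX⟩ => (le_or_gt t 0).elim (·.trans hC) (h t X hX hAX)) hC

section Blowup

variable {ι : Type*} [Fintype V] [Fintype ι] [DecidableEq ι] {G : SimpleGraph V} {π : V → ι}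
  {R : ι → ι → Prop}

def fiberSum (π : V → ι) (X : V → ℝ) (k : ι) : ℝ :=
  ∑ x with π x = k, X x

theorem adjMat_mulVec_apply_eq_sum_fiberSum (hG : ∀ x y, G.Adj x y ↔ R (π x) (π y))
    (X : V → ℝ) (x : V) :
    (adjMat G *ᵥ X) x = ∑ k with R (π x) k, fiberSum π X k := by
  simp only [Matrix.mulVec, dotProduct, adjMat, hG, ite_mul, one_mul, zero_mul, fiberSum]
  rw [sum_filter, ← sum_fiberwise univ π]
  refine sum_congr rfl fun k _ => ?_
  split_ifs with hk
  · exact sum_congr rfl fun y hy => by rw [(mem_filter.1 hy).2, if_pos hk]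
  · exact sum_eq_zero fun y hy => by rw [(mem_filter.1 hy).2, if_neg hk]

theorem mul_fiberSum_of_mulVec_eq (hG : ∀ x y, G.Adj x y ↔ R (π x) (π y)) {X : V → ℝ} {t : ℝ}
    (hAX : adjMat G *ᵥ X = t • X) (k : ι) :
    t * fiberSum π X k = #{x | π x = k} * ∑ j with R k j, fiberSum π X j := by
  calc t * fiberSum π X k = ∑ x with π x = k, (adjMat G *ᵥ X) x := by
        simp [fiberSum, hAX, mul_sum]
    _ = ∑ x with π x = k, ∑ j with R k j, fiberSum π X j :=
        sum_congr rfl fun x hx => by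
          rw [adjMat_mulVec_apply_eq_sum_fiberSum hG, (mem_filter.1 hx).2]
    _ = _ := by rw [sum_const, nsmul_eq_mul]

theorem fiberSum_ne_zero_of_mulVec_eq (hG : ∀ x y, G.Adj x y ↔ R (π x) (π y)) {X : V → ℝ}
    {t : ℝ} (hX : X ≠ 0) (ht : t ≠ 0) (hAX : adjMat G *ᵥ X = t • X) : fiberSum π X ≠ 0 := by
  intro h0
  refine hX (funext fun x => (mul_eq_zero.1 ?_).resolve_left ht)
  rw [← smul_eq_mul, ← Pi.smul_apply, ← hAX, adjMat_mulVec_apply_eq_sum_fiberSum hG]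
  simp [h0]

end Blowup

def partFin {p q m n : ℕ} (x : TBV p q m n) : Fin 5 :=
  ⟨part x, by rcases x with _ | _ | _ | _ | _ <;> simp [part]⟩

/-- The quotient graph of `twoBlock` over `partFin`: the path `1 – 0 – 2 – 4 – 3`. -/
def twoBlockQuotAdj (i j : Fin 5) : Prop :=
  (i.val = 0 ∧ (j.val = 1 ∨ j.val = 2)) ∨ ((i.val = 1 ∨ i.val = 2) ∧ j.val = 0) ∨
    ((i.val = 2 ∨ i.val = 3) ∧ j.val = 4) ∨ (i.val = 4 ∧ (j.val = 2 ∨ j.val = 3))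

theorem twoBlock_adj_iff {p q m n : ℕ} (x y : TBV p q m n) :
    (twoBlock p q m n).Adj x y ↔ twoBlockQuotAdj (partFin x) (partFin y) :=
  Iff.rfl

theorem card_partFin_eq (p q m n : ℕ) (k : Fin 5) :
    #{x : TBV p q m n | partFin x = k} = ![p, q - 1, 1, m - 1, n] k := by
  rw [card_eq_sum_ones, sum_filter]
  simp only [Fintype.sum_sum_type]
  fin_cases k <;> simp [partFin, part, Fin.ext_iff]

theorem sub_mul_sub_eq_of_quotient_eqs {p q m n t : ℝ} {S : Fin 5 → ℝ} (hp : p ≠ 0)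
    (ht : t ≠ 0) (hS : S ≠ 0) (h0 : t * S 0 = p * (S 1 + S 2)) (h1 : t * S 1 = (q - 1) * S 0)
    (h2 : t * S 2 = S 0 + S 4) (h3 : t * S 3 = (m - 1) * S 4) (h4 : t * S 4 = n * (S 2 + S 3)) :
    (t ^ 2 - p * q) * (t ^ 2 - n * m) = p * n := by
  have hP : (t ^ 2 - p * q) * S 0 = p * S 4 := by linear_combination t * h0 + p * h1 + p * h2
  have hN : (t ^ 2 - n * m) * S 4 = n * S 0 := by linear_combination t * h4 + n * h2 + n * h3
  have hS0 : S 0 ≠ 0 := by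
    intro hS0
    have hS4 : S 4 = 0 := by simpa [hS0, hp] using hP.symm
    have hS1 : S 1 = 0 := by simpa [hS0, ht] using h1
    have hS2 : S 2 = 0 := by simpa [hS0, hS4, ht] using h2
    have hS3 : S 3 = 0 := by simpa [hS4, ht] using h3
    exact hS (funext fun k => by fin_cases k <;> assumption)
  exact mul_right_cancel₀ hS0 (by linear_combination (t ^ 2 - n * m) * hP + p * hN)

theorem twoBlock_eigenvalue_eq {p q m n : ℕ} (hp : 0 < p) (hq : 0 < q) (hm : 0 < m)
    {X : TBV p q m n → ℝ} {t : ℝ} (hX : X ≠ 0) (ht : t ≠ 0)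
    (hAX : adjMat (twoBlock p q m n) *ᵥ X = t • X) :
    (t ^ 2 - p * q) * (t ^ 2 - n * m) = p * n := by
  have h k := mul_fiberSum_of_mulVec_eq twoBlock_adj_iff hAX k
  simp only [sum_filter, Fin.sum_univ_five, card_partFin_eq] at h
  refine sub_mul_sub_eq_of_quotient_eqs (by positivity) ht
    (fiberSum_ne_zero_of_mulVec_eq twoBlock_adj_iff hX ht hAX) ?_ ?_ ?_ ?_ ?_
  · simpa [twoBlockQuotAdj] using h 0
  · simpa [twoBlockQuotAdj, Nat.cast_pred hq] using h 1
  · simpa [twoBlockQuotAdj] using h 2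
  · simpa [twoBlockQuotAdj, Nat.cast_pred hm] using h 3
  · simpa [twoBlockQuotAdj] using h 4

/-- The larger root of `(x - α) * (x - β) = γ`. -/
def largerRoot (α β γ : ℝ) : ℝ :=
  (α + β + √((α - β) ^ 2 + 4 * γ)) / 2

theorem le_largerRoot {α β γ x : ℝ} (h : (x - α) * (x - β) = γ) : x ≤ largerRoot α β γ := by
  have hsq : (α - β) ^ 2 + 4 * γ = (2 * x - α - β) ^ 2 := by rw [← h]; ring
  have : 2 * x - α - β ≤ √((α - β) ^ 2 + 4 * γ) := by
    rw [hsq, Real.sqrt_sq_eq_abs]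
    exact le_abs_self _
  rw [largerRoot]
  linarith

theorem largerRoot_sub_mul_sub {α β γ : ℝ} (hγ : 0 ≤ γ) :
    (largerRoot α β γ - α) * (largerRoot α β γ - β) = γ := by
  have := Real.sq_sqrt (by positivity : 0 ≤ (α - β) ^ 2 + 4 * γ)
  rw [largerRoot]
  linear_combination this / 4

theorem largerRoot_lt {α β γ T : ℝ} (hγ : 0 ≤ γ) (hα : α < T) (hβ : β < T)
    (hT : γ < (T - α) * (T - β)) : largerRoot α β γ < T := by
  by_contra! h
  have := mul_le_mul (sub_le_sub_right h α) (sub_le_sub_right h β) (sub_pos.2 hβ).le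
    ((sub_pos.2 hα).trans_le (sub_le_sub_right h α)).le
  linarith [largerRoot_sub_mul_sub (α := α) (β := β) hγ]

theorem twoBlock_specRad_lt_case_general (p q m n : ℕ)
    (hp : 0 < p) (hm : 0 < m)
    (hpq : p + 1 < q) :
    specRad (twoBlock p q m n) <
      Real.sqrt (((p : ℝ) + m) * ((q : ℝ) + n - 1)) := by
  have hp' : (1 : ℝ) ≤ p := by exact_mod_cast hp
  have hm' : (1 : ℝ) ≤ m := by exact_mod_cast hm
  have hpq' : (p : ℝ) + 2 ≤ q := by exact_mod_cast hpq
  have hn' : (0 : ℝ) ≤ n := n.cast_nonneg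
  set T : ℝ := (p + m) * (q + n - 1)
  have hα : p * q + 1 ≤ T := by
    nlinarith [mul_nonneg (sub_nonneg.2 hm') (by linarith : (0 : ℝ) ≤ q + n - 1)]
  have hβ : p * n < T - n * m := by nlinarith
  have hpn : (0 : ℝ) ≤ p * n := by positivity
  have hr : largerRoot (p * q) (n * m) (p * n) < T :=
    largerRoot_lt hpn (by linarith) (by linarith)
      (hβ.trans_le (le_mul_of_one_le_left (by linarith) (by linarith)))
  calc specRad (twoBlock p q m n) ≤ √(largerRoot (p * q) (n * m) (p * n)) :=
        specRad_le_of_forall_pos_eigenvalue_le _ (Real.sqrt_nonneg _) fun t X hX hAX ht =>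
          Real.le_sqrt_of_sq_le <| le_largerRoot <|
            twoBlock_eigenvalue_eq hp (by omega) hm hX ht.ne' hAX
    _ < √T := (Real.sqrt_lt_sqrt_iff_of_pos (by nlinarith)).2 hr

/-- for positive integers with `p < q - 1` and `n > m`, the spectral
radius of `G(p,q,m,n)` is strictly less than `√((p+m)(q+n-1))`, the spectral
radius of `K_{p+m, q+n-1}`. -/
theorem twoBlock_specRad_lt_case (p q m n : ℕ)
    (hp : 0 < p) (hq : 0 < q) (hm : 0 < m) (hn : 0 < n)
    (hpq : p + 1 < q) (hnm : m < n) :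
    specRad (twoBlock p q m n) <
      Real.sqrt (((p : ℝ) + m) * ((q : ℝ) + n - 1)) :=
  twoBlock_specRad_lt_case_general p q m n hp hm hpq

end BiBlockPaper
end
end
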